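/- Let n, p, q, k ∈ ℕ with k ≥ 1 and q < p, let C ∈ ℝ^{p×n}, and let (G_j)_{j∈ℕ} be a sequence of matrices in ℝ^{n×n}. For each i ∈ {1,…,p}, define the linear map Φ_{k,i} : ℝ^n → ℝ^k by (Φ_{k,i} z)_j = (C G_j z)_i for j ∈ {0,…,k−1}. Suppose there exist real numbers α > 0 and β > 0 such that α ‖z‖₂ ≤ ‖Φ_{k,i} z‖₂ ≤ β ‖z‖₂ for every i ∈ {1,…,p} and every z ∈ ℝ^n, and suppose qβ < (p − q)α. Then for every K ⊆ {1,…,p} with |K| = q and every z ∈ ℝ^n with z ≠ 0, Σ_{i∈K} ‖Φ_{k,i} z‖₂ < Σ_{i∈K^c} ‖Φ_{k,i} z‖₂. -/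
import Mathlib


/-- The Euclidean norm of a vector `w ∈ ℝ^m`. -/
noncomputable def l2Norm {m : ℕ} (w : Fin m → ℝ) : ℝ :=
  Real.sqrt (∑ j, w j ^ 2)

/-- The `i`-th row of the matrix `Φ_k z ∈ ℝ^{p×k}`: the linear map
`Φ_{k,i} : z ↦ ((C G_0 z)_i, …, (C G_{k−1} z)_i)`. -/
def PhiRow {n p : ℕ} (C : Matrix (Fin p) (Fin n) ℝ)
    (G : ℕ → Matrix (Fin n) (Fin n) ℝ) (k : ℕ) (z : Fin n → ℝ) (i : Fin p) :
    Fin k → ℝ :=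
  fun j => (C * G (j : ℕ)).mulVec z i

/-- If `α ‖z‖₂ ≤ ‖Φ_{k,i} z‖₂ ≤ β ‖z‖₂` for all channels `i` and all `z`,
with `α, β > 0` and `qβ < (p − q)α`, then for every `K` with `|K| = q` and every nonzero
`z`, `Σ_{i∈K} ‖Φ_{k,i} z‖₂ < Σ_{i∈K^c} ‖Φ_{k,i} z‖₂`. -/
theorem singular_value_sufficient_condition
    (n p q k : ℕ) (hk : 1 ≤ k) (hqp : q < p)
    (C : Matrix (Fin p) (Fin n) ℝ)
    (G : ℕ → Matrix (Fin n) (Fin n) ℝ)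
    (α β : ℝ) (hα : 0 < α) (hβ : 0 < β)
    (hbounds : ∀ (i : Fin p) (z : Fin n → ℝ),
      α * l2Norm z ≤ l2Norm (PhiRow C G k z i) ∧ l2Norm (PhiRow C G k z i) ≤ β * l2Norm z)
    (hqαβ : (q : ℝ) * β < ((p : ℝ) - (q : ℝ)) * α) :
    ∀ K : Finset (Fin p), K.card = q →
      ∀ z : Fin n → ℝ, z ≠ 0 →
        ∑ i ∈ K, l2Norm (PhiRow C G k z i) < ∑ i ∈ Kᶜ, l2Norm (PhiRow C G k z i) := by

  intro K hK z hz
  have hznorm : 0 < l2Norm z := by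
    have hx : ∃ i, z i ≠ 0 := by
      by_contra h
      push_neg at h
      exact hz (funext h)
    obtain ⟨i, hi⟩ := hx
    have hpos : 0 < ∑ j, z j ^ 2 := by
      apply Finset.sum_pos' (fun j _ => sq_nonneg _)
      exact ⟨i, Finset.mem_univ i, by positivity⟩
    exact Real.sqrt_pos.mpr hpos
  have h1 : ∑ i ∈ K, l2Norm (PhiRow C G k z i) ≤ (q : ℝ) * (β * l2Norm z) := by
    calc ∑ i ∈ K, l2Norm (PhiRow C G k z i) ≤ ∑ _i ∈ K, β * l2Norm z :=
          Finset.sum_le_sum (fun i _ => (hbounds i z).2)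
      _ = (q : ℝ) * (β * l2Norm z) := by rw [Finset.sum_const, hK, nsmul_eq_mul]
  have hKc : (Kᶜ.card : ℝ) = (p : ℝ) - q := by
    have := Finset.card_compl K
    rw [this, hK]
    simp [Fintype.card_fin]
    rw [Nat.cast_sub (le_of_lt hqp)]
  have h2 : ((p : ℝ) - q) * (α * l2Norm z) ≤ ∑ i ∈ Kᶜ, l2Norm (PhiRow C G k z i) := by
    calc ((p : ℝ) - q) * (α * l2Norm z) = ∑ _i ∈ Kᶜ, α * l2Norm z := by
          rw [Finset.sum_const, nsmul_eq_mul, hKc]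
      _ ≤ ∑ i ∈ Kᶜ, l2Norm (PhiRow C G k z i) :=
          Finset.sum_le_sum (fun i _ => (hbounds i z).1)
  have hmid : (q : ℝ) * (β * l2Norm z) < ((p : ℝ) - q) * (α * l2Norm z) := by
    have := mul_lt_mul_of_pos_right hqαβ hznorm
    linarith [this]
  linarith
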